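/- arXiv:0811.1410 — 3 statements merged into one kernel-verified Lean document; each statement's English description precedes it below -/
import Mathlib

section
/- Existence part of Bernstein's theorem on polynomial families of affine systems: Let Φ be a set of ℂ-algebra homomorphisms A → ℂ such that for every nonzero a ∈ A there exists φ ∈ Φ with φ(a) ≠ 0. If for every φ ∈ Φ the specialized system Ξ_φ has a solution, then the system Ξ over M has a solution. -/
open scoped TensorProduct

/-- **Existence part of Bernstein's theorem on polynomial families of affine systems.**
`A` is an integral domain which is a `ℂ`-algebra, `M` its field of fractions, `V` a
`ℂ`-vector space, and `(x r, c r)` for `r : R` a polynomial family of affine systems `Ξ`.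
If `Φ` is a set of `ℂ`-algebra homomorphisms `A → ℂ` separating the nonzero elements
of `A`, and every specialized system `Ξ_φ` (for `φ ∈ Φ`) has a solution, then the system
`Ξ` over `M` has a solution. -/
theorem bernstein_existence
    (A : Type*) [CommRing A] [IsDomain A] [Algebra ℂ A]
    (M : Type*) [Field M] [Algebra A M] [IsFractionRing A M]
    [Algebra ℂ M] [IsScalarTower ℂ A M]
    (V : Type*) [AddCommGroup V] [Module ℂ V]
    (R : Type*) (x : R → A ⊗[ℂ] V) (c : R → A)
    (Φ : Set (A →ₐ[ℂ] ℂ))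
    (hsep : ∀ a : A, a ≠ 0 → ∃ φ ∈ Φ, φ a ≠ 0)
    (hsol : ∀ φ ∈ Φ, ∃ lam : V →ₗ[ℂ] ℂ, ∀ r : R,
      lam (TensorProduct.lift ((LinearMap.lsmul ℂ V).comp φ.toLinearMap) (x r)) = φ (c r)) :
    ∃ Λ : M ⊗[ℂ] V →ₗ[M] M, ∀ r : R,
      Λ (TensorProduct.map (IsScalarTower.toAlgHom ℂ A M).toLinearMap LinearMap.id (x r))
        = algebraMap A M (c r) := by
  classical
  set g : A →ₗ[ℂ] M := (IsScalarTower.toAlgHom ℂ A M).toLinearMap with hg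
  set j : A ⊗[ℂ] V →ₗ[ℂ] M ⊗[ℂ] V := TensorProduct.map g LinearMap.id with hjdef
  have hginj : Function.Injective g := IsFractionRing.injective A M
  have hjinj : Function.Injective j :=
    Module.Flat.rTensor_preserves_injective_linearMap (M := V) g hginj
  have hga : ∀ a : A, g a = algebraMap A M a := fun a => rfl
  have hsmul : ∀ (a : A) (z : A ⊗[ℂ] V), j (a • z) = algebraMap A M a • j z := by
    intro a z
    induction z using TensorProduct.induction_on with
    | zero => simp
    | tmul b v =>
      simp only [TensorProduct.smul_tmul', hjdef, TensorProduct.map_tmul,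
        LinearMap.id_coe, id_eq, smul_eq_mul, hga, map_mul]
    | add y z hy hz => simp [smul_add, hy, hz]
  set f : R → M ⊗[ℂ] V := fun r => j (x r) with hf
  set cb : R → M := fun r => algebraMap A M (c r) with hcb
  set T : (R →₀ M) →ₗ[M] M ⊗[ℂ] V := Finsupp.linearCombination M f with hT
  set C : (R →₀ M) →ₗ[M] M := Finsupp.linearCombination M cb with hC
  have hker : LinearMap.ker T ≤ LinearMap.ker C := by
    intro v hv
    rw [LinearMap.mem_ker] at hv ⊢
    obtain ⟨d, hd⟩ := IsLocalization.exist_integer_multiples (nonZeroDivisors A) v.support v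
    have hd' : ∀ r : R, ∃ a : A, (r ∈ v.support → algebraMap A M a = (d : A) • v r) := by
      intro r
      by_cases hr : r ∈ v.support
      · obtain ⟨a, ha⟩ := hd r hr; exact ⟨a, fun _ => ha⟩
      · exact ⟨0, fun h => absurd h hr⟩
    choose a ha using hd'
    set y : A ⊗[ℂ] V := ∑ r ∈ v.support, a r • x r with hy
    have hjy : j y = algebraMap A M (d : A) • T v := by
      rw [hy, map_sum, hT, Finsupp.linearCombination_apply, Finsupp.sum, Finset.smul_sum]
      refine Finset.sum_congr rfl fun r hr => ?_
      rw [hsmul, ha r hr, Algebra.smul_def, mul_smul]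
    have hy0 : y = 0 := by
      apply hjinj
      rw [hjy, hv, smul_zero, map_zero]
    have hs0 : ∑ r ∈ v.support, a r * c r = 0 := by
      by_contra hs
      obtain ⟨φ, hφΦ, hφs⟩ := hsep _ hs
      obtain ⟨lam, hlam⟩ := hsol φ hφΦ
      set P : A ⊗[ℂ] V →ₗ[ℂ] V :=
        TensorProduct.lift ((LinearMap.lsmul ℂ V).comp φ.toLinearMap) with hP
      have hPs : ∀ (b : A) (z : A ⊗[ℂ] V), P (b • z) = φ b • P z := by
        intro b z
        induction z using TensorProduct.induction_on with
        | zero => simp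
        | tmul a' v' =>
          simp [hP, TensorProduct.smul_tmul', smul_eq_mul, map_mul, mul_smul]
        | add y z hy hz => simp [smul_add, hy, hz]
      have : lam (P y) = φ (∑ r ∈ v.support, a r * c r) := by
        rw [hy, map_sum, map_sum, map_sum]
        refine Finset.sum_congr rfl fun r hr => ?_
        rw [hPs, map_smul, smul_eq_mul, hlam r, map_mul]
      rw [hy0, map_zero, map_zero] at this
      exact hφs this.symm
    have hdC : algebraMap A M (d : A) * C v = 0 := by
      have : algebraMap A M (d : A) * C v
          = algebraMap A M (∑ r ∈ v.support, a r * c r) := by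
        rw [hC, Finsupp.linearCombination_apply, Finsupp.sum, Finset.mul_sum, map_sum]
        refine Finset.sum_congr rfl fun r hr => ?_
        simp only [hcb, smul_eq_mul, map_mul, ha r hr, Algebra.smul_def]
        ring
      rw [this, hs0, map_zero]
    have hdne : algebraMap A M (d : A) ≠ 0 := by
      have := nonZeroDivisors.coe_ne_zero d
      simpa using (map_ne_zero_iff _ (IsFractionRing.injective A M)).mpr this
    exact (mul_eq_zero.mp hdC).resolve_left hdne
  set e : ((R →₀ M) ⧸ LinearMap.ker T) ≃ₗ[M] LinearMap.range T := T.quotKerEquivRange with he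
  set h0 : LinearMap.range T →ₗ[M] M :=
    ((LinearMap.ker T).liftQ C hker).comp e.symm.toLinearMap with hh0
  obtain ⟨Λ, hΛ⟩ := LinearMap.exists_extend h0
  refine ⟨Λ, fun r => ?_⟩
  have hTr : T (Finsupp.single r 1) = f r := by
    rw [hT, Finsupp.linearCombination_single, one_smul]
  show Λ (f r) = cb r
  rw [← hTr]
  have hmem : T (Finsupp.single r 1) ∈ LinearMap.range T := LinearMap.mem_range_self _ _
  have h1 : Λ (T (Finsupp.single r 1)) = h0 ⟨T (Finsupp.single r 1), hmem⟩ := by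
    have := congrArg (fun ψ : LinearMap.range T →ₗ[M] M =>
      ψ ⟨T (Finsupp.single r 1), hmem⟩) hΛ
    simpa using this
  rw [h1, hh0, LinearMap.comp_apply]
  have h2 : e.symm ⟨T (Finsupp.single r 1), hmem⟩
      = (LinearMap.ker T).mkQ (Finsupp.single r 1) := by
    rw [he]; exact T.quotKerEquivRange_symm_apply_image (Finsupp.single r 1) hmem
  simp only [LinearEquiv.coe_coe]
  rw [h2, Submodule.mkQ_apply, Submodule.liftQ_apply, hC, Finsupp.linearCombination_single, one_smul]
end

section
/- Uniqueness part of Bernstein's theorem on polynomial families of affine systems: Suppose V has countable dimension over ℂ. Let Φ be a set of ℂ-algebra homomorphisms A → ℂ such that for every countable family (a_j)_{j ∈ ℕ} of nonzero elements of A there exists φ ∈ Φ with φ(a_j) ≠ 0 for all j. If for every φ ∈ Φ the specialized system Ξ_φ has at most one solution, then the system Ξ over M has at most one solution. -/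
open scoped TensorProduct

/-- **Uniqueness part of Bernstein's theorem on polynomial families of affine systems.**
`V` has countable dimension over `ℂ`. If `Φ` is a set of `ℂ`-algebra homomorphisms
`A → ℂ` such that for every countable family of nonzero elements of `A` some `φ ∈ Φ`
is nonzero on all of them, and each specialized system `Ξ_φ` (for `φ ∈ Φ`) has at most
one solution, then the system `Ξ` over the fraction field `M` has at most one solution. -/
theorem bernstein_uniqueness
    (A : Type*) [CommRing A] [IsDomain A] [Algebra ℂ A]
    (M : Type*) [Field M] [Algebra A M] [IsFractionRing A M]
    [Algebra ℂ M] [IsScalarTower ℂ A M]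
    (V : Type*) [AddCommGroup V] [Module ℂ V]
    (hV : ∃ s : Set V, s.Countable ∧ Submodule.span ℂ s = ⊤)
    (R : Type*) (x : R → A ⊗[ℂ] V) (c : R → A)
    (Φ : Set (A →ₐ[ℂ] ℂ))
    (hsep : ∀ a : ℕ → A, (∀ j : ℕ, a j ≠ 0) → ∃ φ ∈ Φ, ∀ j : ℕ, φ (a j) ≠ 0)
    (huniq : ∀ φ ∈ Φ, ∀ lam₁ lam₂ : V →ₗ[ℂ] ℂ,
      (∀ r : R, lam₁ (TensorProduct.lift ((LinearMap.lsmul ℂ V).comp φ.toLinearMap) (x r))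
        = φ (c r)) →
      (∀ r : R, lam₂ (TensorProduct.lift ((LinearMap.lsmul ℂ V).comp φ.toLinearMap) (x r))
        = φ (c r)) →
      lam₁ = lam₂) :
    ∀ Λ₁ Λ₂ : M ⊗[ℂ] V →ₗ[M] M,
      (∀ r : R, Λ₁ (TensorProduct.map (IsScalarTower.toAlgHom ℂ A M).toLinearMap
        LinearMap.id (x r)) = algebraMap A M (c r)) →
      (∀ r : R, Λ₂ (TensorProduct.map (IsScalarTower.toAlgHom ℂ A M).toLinearMap
        LinearMap.id (x r)) = algebraMap A M (c r)) →
      Λ₁ = Λ₂ := by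
  intro Λ₁ Λ₂ h₁ h₂
  classical
  by_contra hne
  -- Step 1: find a vector where the two forms differ on `1 ⊗ v`.
  have hv0 : ∃ v : V, Λ₁ ((1 : M) ⊗ₜ[ℂ] v) ≠ Λ₂ ((1 : M) ⊗ₜ[ℂ] v) := by
    by_contra h
    push_neg at h
    apply hne
    apply LinearMap.ext
    intro t
    induction t using TensorProduct.induction_on with
    | zero => simp
    | tmul m v =>
        have hmv : (m ⊗ₜ[ℂ] v : M ⊗[ℂ] V) = m • ((1 : M) ⊗ₜ[ℂ] v) := by
          rw [TensorProduct.smul_tmul', smul_eq_mul, mul_one]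
        rw [hmv, map_smul, map_smul, h v]
    | add t₁ t₂ ih₁ ih₂ => rw [map_add, map_add, ih₁, ih₂]
  obtain ⟨v₀, hv₀⟩ := hv0
  -- Step 2: countable spanning family
  obtain ⟨s, hsc, hss⟩ := hV
  obtain ⟨w, hw⟩ := (hsc.insert (0 : V)).exists_eq_range ⟨0, Set.mem_insert 0 s⟩
  have hwspan : Submodule.span ℂ (Set.range w) = ⊤ := by
    rw [← hw, Submodule.span_insert_zero, hss]
  -- Step 3: numerators and denominators
  choose nd hnd using fun m : M => IsLocalization.surj (nonZeroDivisors A) m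
  set d : M := Λ₁ ((1 : M) ⊗ₜ[ℂ] v₀) - Λ₂ ((1 : M) ⊗ₜ[ℂ] v₀) with hd
  have hdne : d ≠ 0 := sub_ne_zero.mpr hv₀
  have hden_ne : ∀ m : M, ((nd m).2 : A) ≠ 0 :=
    fun m => nonZeroDivisors.ne_zero (nd m).2.2
  have hnum_d : (nd d).1 ≠ 0 := by
    intro h0
    have h := hnd d
    rw [h0, map_zero, mul_eq_zero] at h
    rcases h with h | h
    · exact hdne h
    · exact hden_ne d (IsFractionRing.to_map_eq_zero_iff.mp h)
  -- the countable family μ of values on the spanning set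
  set μ : ℕ → M := fun n =>
    if n % 2 = 0 then Λ₁ ((1 : M) ⊗ₜ[ℂ] w (n / 2)) else Λ₂ ((1 : M) ⊗ₜ[ℂ] w (n / 2))
    with hμ
  set a : ℕ → A := fun n =>
    match n with
    | 0 => (nd d).1
    | 1 => ((nd d).2 : A)
    | (n + 2) => ((nd (μ n)).2 : A)
    with ha_def
  have ha : ∀ j : ℕ, a j ≠ 0 := by
    intro j
    match j with
    | 0 => exact hnum_d
    | 1 => exact hden_ne d
    | (n + 2) => exact hden_ne (μ n)
  obtain ⟨φ, hφΦ, hφ⟩ := hsep a ha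
  -- Step 4: localization at the multiplicative set generated by the family
  set S : Submonoid A := Submonoid.closure (Set.range a) with hS
  have hmemS : ∀ j, a j ∈ S := fun j => Submonoid.subset_closure ⟨j, rfl⟩
  have hSle : ∀ y : A, y ∈ S → y ≠ 0 := by
    intro y hy
    induction hy using Submonoid.closure_induction with
    | mem z hz => obtain ⟨j, rfl⟩ := hz; exact ha j
    | one => exact one_ne_zero
    | mul z₁ z₂ _ _ hz₁ hz₂ => exact mul_ne_zero hz₁ hz₂
  have hφS : ∀ y : A, y ∈ S → φ y ≠ 0 := by
    intro y hy
    induction hy using Submonoid.closure_induction with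
    | mem z hz => obtain ⟨j, rfl⟩ := hz; exact hφ j
    | one => simp
    | mul z₁ z₂ _ _ hz₁ hz₂ => rw [map_mul]; exact mul_ne_zero hz₁ hz₂
  -- the two lifts out of the localization
  have hgM : ∀ y : S, IsUnit (algebraMap A M (y : A)) := by
    rintro ⟨y, hy⟩
    exact isUnit_iff_ne_zero.mpr (fun h0 =>
      hSle y hy (IsFractionRing.to_map_eq_zero_iff.mp h0))
  have hgC : ∀ y : S, IsUnit (φ.toRingHom (y : A)) := by
    rintro ⟨y, hy⟩
    exact isUnit_iff_ne_zero.mpr (hφS y hy)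
  set L := Localization S with hL
  set ι : L →+* M := IsLocalization.lift hgM with hι
  set ψ : L →+* ℂ := IsLocalization.lift hgC with hψ
  have hιa : ∀ z : A, ι (algebraMap A L z) = algebraMap A M z :=
    fun z => IsLocalization.lift_eq hgM z
  have hψa : ∀ z : A, ψ (algebraMap A L z) = φ z :=
    fun z => IsLocalization.lift_eq hgC z
  have hιinj : Function.Injective ι := by
    rw [injective_iff_map_eq_zero]
    intro z hz
    obtain ⟨⟨n, dd⟩, hzz⟩ := IsLocalization.surj S z
    have h1 : algebraMap A M n = 0 := by
      rw [← hιa n, ← hzz, map_mul, hz, zero_mul]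
    have h2 : n = 0 := IsFractionRing.to_map_eq_zero_iff.mp h1
    have h3 : z * algebraMap A L (dd : A) = 0 := by rw [hzz, h2, map_zero]
    have h4 := (IsLocalization.map_units L dd)
    rcases h4 with ⟨u, hu⟩
    rw [← hu] at h3
    exact (Units.mul_left_eq_zero u).mp h3
  -- the preimage function
  set pre : M → L := fun m => if h : ∃ l, ι l = m then h.choose else 0 with hpre_def
  have hpre : ∀ l : L, pre (ι l) = l := by
    intro l
    have h : ∃ l', ι l' = ι l := ⟨l, rfl⟩
    simp only [hpre_def, dif_pos h]
    exact hιinj h.choose_spec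
  -- each μ n is in the range of ι
  have hμmem : ∀ n : ℕ, ι (IsLocalization.mk' L (nd (μ n)).1
      ⟨((nd (μ n)).2 : A), hmemS (n + 2)⟩) = μ n := by
    intro n
    have hspec := (IsLocalization.lift_mk'_spec (g := algebraMap A M) hgM (nd (μ n)).1
      (ι (IsLocalization.mk' L (nd (μ n)).1 ⟨((nd (μ n)).2 : A), hmemS (n + 2)⟩))
      ⟨((nd (μ n)).2 : A), hmemS (n + 2)⟩).mp rfl
    have hd0 : algebraMap A M ((nd (μ n)).2 : A) ≠ 0 :=
      fun h0 => hden_ne (μ n) (IsFractionRing.to_map_eq_zero_iff.mp h0)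
    apply mul_left_cancel₀ hd0
    rw [← hspec, ← hnd (μ n)]
    ring
  -- membership of all values in the range of ι
  have key : ∀ v : V, (∃ l, ι l = Λ₁ ((1 : M) ⊗ₜ[ℂ] v)) ∧ (∃ l, ι l = Λ₂ ((1 : M) ⊗ₜ[ℂ] v)) := by
    have hsmul : ∀ (z : ℂ) (Λ : M ⊗[ℂ] V →ₗ[M] M) (v : V),
        Λ ((1 : M) ⊗ₜ[ℂ] (z • v)) = algebraMap ℂ M z * Λ ((1 : M) ⊗ₜ[ℂ] v) := by
      intro z Λ v
      rw [TensorProduct.tmul_smul, ← algebraMap_smul M z, map_smul, smul_eq_mul]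
    have halgC : ∀ z : ℂ, ι (algebraMap A L (algebraMap ℂ A z)) = algebraMap ℂ M z := by
      intro z
      rw [hιa, ← IsScalarTower.algebraMap_apply]
    set p : Submodule ℂ V :=
      { carrier := {v | (∃ l, ι l = Λ₁ ((1 : M) ⊗ₜ[ℂ] v)) ∧ (∃ l, ι l = Λ₂ ((1 : M) ⊗ₜ[ℂ] v))}
        add_mem' := by
          rintro v v' ⟨⟨l₁, hl₁⟩, ⟨l₂, hl₂⟩⟩ ⟨⟨l₁', hl₁'⟩, ⟨l₂', hl₂'⟩⟩
          constructor
          · exact ⟨l₁ + l₁', by rw [map_add, hl₁, hl₁', TensorProduct.tmul_add, map_add]⟩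
          · exact ⟨l₂ + l₂', by rw [map_add, hl₂, hl₂', TensorProduct.tmul_add, map_add]⟩
        zero_mem' := by
          constructor
          · exact ⟨0, by rw [map_zero, TensorProduct.tmul_zero, map_zero]⟩
          · exact ⟨0, by rw [map_zero, TensorProduct.tmul_zero, map_zero]⟩
        smul_mem' := by
          rintro z v ⟨⟨l₁, hl₁⟩, ⟨l₂, hl₂⟩⟩
          constructor
          · exact ⟨algebraMap A L (algebraMap ℂ A z) * l₁,
              by rw [map_mul, hl₁, halgC, hsmul]⟩
          · exact ⟨algebraMap A L (algebraMap ℂ A z) * l₂,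
              by rw [map_mul, hl₂, halgC, hsmul]⟩ }
    have hptop : p = ⊤ := by
      apply top_unique
      rw [← hwspan]
      apply Submodule.span_le.mpr
      rintro _ ⟨j, rfl⟩
      constructor
      · refine ⟨IsLocalization.mk' L (nd (μ (2 * j))).1
          ⟨((nd (μ (2 * j))).2 : A), hmemS (2 * j + 2)⟩, ?_⟩
        rw [hμmem (2 * j)]
        simp only [hμ]
        have e1 : (2 * j) % 2 = 0 := by omega
        have e2 : 2 * j / 2 = j := by omega
        rw [if_pos e1, e2]
      · refine ⟨IsLocalization.mk' L (nd (μ (2 * j + 1))).1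
          ⟨((nd (μ (2 * j + 1))).2 : A), hmemS (2 * j + 1 + 2)⟩, ?_⟩
        rw [hμmem (2 * j + 1)]
        simp only [hμ]
        have e1 : ¬((2 * j + 1) % 2 = 0) := by omega
        have e2 : (2 * j + 1) / 2 = j := by omega
        rw [if_neg e1, e2]
    intro v
    have : v ∈ p := by rw [hptop]; trivial
    exact this
  -- Step 5: the specialized solutions
  have mk_lam : ∀ Λ : M ⊗[ℂ] V →ₗ[M] M,
      (∀ v : V, ∃ l, ι l = Λ ((1 : M) ⊗ₜ[ℂ] v)) →
      ∃ lam : V →ₗ[ℂ] ℂ, ∀ v : V, lam v = ψ (pre (Λ ((1 : M) ⊗ₜ[ℂ] v))) := by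
    intro Λ hΛ
    refine ⟨{ toFun := fun v => ψ (pre (Λ ((1 : M) ⊗ₜ[ℂ] v)))
              map_add' := ?_
              map_smul' := ?_ }, fun v => rfl⟩
    · intro v v'
      obtain ⟨l, hl⟩ := hΛ v
      obtain ⟨l', hl'⟩ := hΛ v'
      show ψ (pre (Λ ((1 : M) ⊗ₜ[ℂ] (v + v'))))
        = ψ (pre (Λ ((1 : M) ⊗ₜ[ℂ] v))) + ψ (pre (Λ ((1 : M) ⊗ₜ[ℂ] v')))
      rw [TensorProduct.tmul_add, map_add, ← hl, ← hl', ← map_add, hpre (l + l'),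
        hpre l, hpre l', map_add]
    · intro z v
      obtain ⟨l, hl⟩ := hΛ v
      show ψ (pre (Λ ((1 : M) ⊗ₜ[ℂ] (z • v))))
        = (RingHom.id ℂ) z • ψ (pre (Λ ((1 : M) ⊗ₜ[ℂ] v)))
      have h1 : Λ ((1 : M) ⊗ₜ[ℂ] (z • v)) = algebraMap ℂ M z * Λ ((1 : M) ⊗ₜ[ℂ] v) := by
        rw [TensorProduct.tmul_smul, ← algebraMap_smul M z, map_smul, smul_eq_mul]
      have h2 : algebraMap ℂ M z * Λ ((1 : M) ⊗ₜ[ℂ] v)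
          = ι (algebraMap A L (algebraMap ℂ A z) * l) := by
        rw [map_mul, hιa, ← IsScalarTower.algebraMap_apply, hl]
      rw [h1, h2, ← hl, hpre (algebraMap A L (algebraMap ℂ A z) * l), hpre l,
        map_mul, hψa, φ.commutes, Algebra.algebraMap_self_apply, RingHom.id_apply, smul_eq_mul]
  obtain ⟨lam₁, hlam₁⟩ := mk_lam Λ₁ (fun v => (key v).1)
  obtain ⟨lam₂, hlam₂⟩ := mk_lam Λ₂ (fun v => (key v).2)
  -- Step 6: they solve the specialized system
  have hsol : ∀ (Λ : M ⊗[ℂ] V →ₗ[M] M) (lam : V →ₗ[ℂ] ℂ),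
      (∀ v : V, ∃ l, ι l = Λ ((1 : M) ⊗ₜ[ℂ] v)) →
      (∀ v : V, lam v = ψ (pre (Λ ((1 : M) ⊗ₜ[ℂ] v)))) →
      ∀ t : A ⊗[ℂ] V, ∃ l, ι l = Λ (TensorProduct.map (IsScalarTower.toAlgHom ℂ A M).toLinearMap
        LinearMap.id t) ∧
        lam (TensorProduct.lift ((LinearMap.lsmul ℂ V).comp φ.toLinearMap) t) = ψ l := by
    intro Λ lam hΛ hlam t
    induction t using TensorProduct.induction_on with
    | zero => exact ⟨0, by simp⟩
    | tmul b v =>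
        obtain ⟨l, hl⟩ := hΛ v
        refine ⟨algebraMap A L b * l, ?_, ?_⟩
        · have : (TensorProduct.map (IsScalarTower.toAlgHom ℂ A M).toLinearMap
              LinearMap.id) (b ⊗ₜ[ℂ] v) = (algebraMap A M b) • ((1 : M) ⊗ₜ[ℂ] v) := by
            rw [TensorProduct.map_tmul, TensorProduct.smul_tmul', smul_eq_mul, mul_one]
            rfl
          rw [this, map_smul, smul_eq_mul, map_mul, hιa, hl]
        · have hspec : (TensorProduct.lift ((LinearMap.lsmul ℂ V).comp φ.toLinearMap))
              (b ⊗ₜ[ℂ] v) = φ b • v := by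
            rw [TensorProduct.lift.tmul]
            rfl
          have hψmul : ψ (algebraMap A L b * l) = φ b * ψ l := by rw [map_mul, hψa]
          rw [hψmul, hspec, map_smul, smul_eq_mul, hlam v, ← hl, hpre l]
    | add t₁ t₂ ih₁ ih₂ =>
        obtain ⟨l₁, hl₁, hl₁'⟩ := ih₁
        obtain ⟨l₂, hl₂, hl₂'⟩ := ih₂
        exact ⟨l₁ + l₂, by simp only [map_add]; rw [hl₁, hl₂],
          by simp only [map_add]; rw [hl₁', hl₂']⟩
  have hsol₁ : ∀ r : R, lam₁ (TensorProduct.lift ((LinearMap.lsmul ℂ V).comp φ.toLinearMap) (x r))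
      = φ (c r) := by
    intro r
    obtain ⟨l, hl, hl'⟩ := hsol Λ₁ lam₁ (fun v => (key v).1) hlam₁ (x r)
    rw [h₁ r, ← hιa (c r)] at hl
    rw [hl', hιinj hl, hψa]
  have hsol₂ : ∀ r : R, lam₂ (TensorProduct.lift ((LinearMap.lsmul ℂ V).comp φ.toLinearMap) (x r))
      = φ (c r) := by
    intro r
    obtain ⟨l, hl, hl'⟩ := hsol Λ₂ lam₂ (fun v => (key v).2) hlam₂ (x r)
    rw [h₂ r, ← hιa (c r)] at hl
    rw [hl', hιinj hl, hψa]
  -- Step 7: uniqueness gives a contradiction at v₀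
  have heq := huniq φ hφΦ lam₁ lam₂ hsol₁ hsol₂
  -- lam₁ v₀ ≠ lam₂ v₀
  obtain ⟨l₁, hl₁⟩ := (key v₀).1
  obtain ⟨l₂, hl₂⟩ := (key v₀).2
  have hdmem : ι (IsLocalization.mk' L (nd d).1 ⟨((nd d).2 : A), hmemS 1⟩) = d := by
    have hspec := (IsLocalization.lift_mk'_spec (g := algebraMap A M) hgM (nd d).1
      (ι (IsLocalization.mk' L (nd d).1 ⟨((nd d).2 : A), hmemS 1⟩))
      ⟨((nd d).2 : A), hmemS 1⟩).mp rfl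
    have hd0 : algebraMap A M ((nd d).2 : A) ≠ 0 :=
      fun h0 => hden_ne d (IsFractionRing.to_map_eq_zero_iff.mp h0)
    apply mul_left_cancel₀ hd0
    rw [← hspec, ← hnd d]
    ring
  have hsub : l₁ - l₂ = IsLocalization.mk' L (nd d).1 ⟨((nd d).2 : A), hmemS 1⟩ := by
    apply hιinj
    rw [map_sub, hl₁, hl₂, hdmem]
  have hψd : ψ (l₁ - l₂) ≠ 0 := by
    rw [hsub]
    intro h0
    have hspec := (IsLocalization.lift_mk'_spec (g := φ.toRingHom) hgC (nd d).1
      (ψ (IsLocalization.mk' L (nd d).1 ⟨((nd d).2 : A), hmemS 1⟩))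
      ⟨((nd d).2 : A), hmemS 1⟩).mp rfl
    rw [h0, mul_zero] at hspec
    exact hφ 0 hspec
  have : lam₁ v₀ ≠ lam₂ v₀ := by
    rw [hlam₁ v₀, hlam₂ v₀, ← hl₁, ← hl₂, hpre l₁, hpre l₂]
    intro h0
    exact hψd (by rw [map_sub, h0, sub_self])
  exact this (by rw [heq])
end

section
/- Specialization part of Bernstein's theorem on polynomial families of affine systems: Suppose V has countable dimension over ℂ, and let Λ be a solution of the system Ξ over M. Then there exists a countable family (p_j)_{j ∈ ℕ} of nonzero elements of A with the following property: for every ℂ-algebra homomorphism φ : A → ℂ satisfying φ(p_j) ≠ 0 for all j, there is a ℂ-linear form λ_φ : V → ℂ such that for every v ∈ V there exist a, b ∈ A with φ(b) ≠ 0, Λ(1 ⊗ v) = a/b in M and λ_φ(v) = φ(a)/φ(b); and any such λ_φ is a solution of the specialized system Ξ_φ. -/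
open scoped TensorProduct

/-- **Specialization part of Bernstein's theorem on polynomial families of affine systems.**
Suppose `V` has countable dimension over `ℂ` and `Λ` is a solution of the system `Ξ`
over the fraction field `M` of `A`.  Then there is a countable family of nonzero
elements `p j` of `A` such that: for every `ℂ`-algebra homomorphism `φ : A → ℂ` with
`φ (p j) ≠ 0` for all `j`, there exists a `ℂ`-linear form `λ_φ : V → ℂ` such that for
every `v : V` there are `a b : A` with `φ b ≠ 0`, `Λ (1 ⊗ v) = a / b` in `M` and
`λ_φ v = φ a / φ b`; and any such `λ_φ` is a solution of the specialized system `Ξ_φ`. -/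
theorem bernstein_specialization
    (A : Type*) [CommRing A] [IsDomain A] [Algebra ℂ A]
    (M : Type*) [Field M] [Algebra A M] [IsFractionRing A M]
    [Algebra ℂ M] [IsScalarTower ℂ A M]
    (V : Type*) [AddCommGroup V] [Module ℂ V]
    (hV : ∃ s : Set V, s.Countable ∧ Submodule.span ℂ s = ⊤)
    (R : Type*) (x : R → A ⊗[ℂ] V) (c : R → A)
    (Λ : M ⊗[ℂ] V →ₗ[M] M)
    (hΛ : ∀ r : R, Λ (TensorProduct.map (IsScalarTower.toAlgHom ℂ A M).toLinearMap
      LinearMap.id (x r)) = algebraMap A M (c r)) :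
    ∃ p : ℕ → A, (∀ j : ℕ, p j ≠ 0) ∧
      ∀ φ : A →ₐ[ℂ] ℂ, (∀ j : ℕ, φ (p j) ≠ 0) →
        ((∃ lam : V →ₗ[ℂ] ℂ, ∀ v : V, ∃ a b : A, φ b ≠ 0 ∧
            Λ ((1 : M) ⊗ₜ[ℂ] v) = algebraMap A M a / algebraMap A M b ∧
            lam v = φ a / φ b) ∧
         (∀ lam : V →ₗ[ℂ] ℂ,
            (∀ v : V, ∃ a b : A, φ b ≠ 0 ∧
              Λ ((1 : M) ⊗ₜ[ℂ] v) = algebraMap A M a / algebraMap A M b ∧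
              lam v = φ a / φ b) →
            ∀ r : R,
              lam (TensorProduct.lift ((LinearMap.lsmul ℂ V).comp φ.toLinearMap) (x r))
                = φ (c r))) := by
  classical
  have hinj : Function.Injective (algebraMap A M) := IsFractionRing.injective A M
  -- choose num/den representation for every v
  have hchoice : ∀ v : V, ∃ ab : A × A, ab.2 ≠ 0 ∧
      Λ ((1:M) ⊗ₜ[ℂ] v) = algebraMap A M ab.1 / algebraMap A M ab.2 := by
    intro v
    obtain ⟨a, b, hb, hab⟩ := IsFractionRing.div_surjective (A := A) (Λ ((1:M) ⊗ₜ[ℂ] v))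
    exact ⟨(a, b), nonZeroDivisors.ne_zero hb, hab.symm⟩
  choose nd hnd0 hndΛ using hchoice
  set num : V → A := fun v => (nd v).1 with hnum
  set den : V → A := fun v => (nd v).2 with hden
  -- countable basis
  obtain ⟨s, hsc, hss⟩ := hV
  obtain ⟨bs, hbss, hbspan, hbli⟩ := exists_linearIndependent ℂ s
  have hbtop : Submodule.span ℂ bs = ⊤ := by rw [hbspan, hss]
  let B : Module.Basis bs ℂ V := Module.Basis.mk hbli (by rw [Subtype.range_coe, hbtop])
  -- enumerate denominators
  have hcnt : (den '' bs ∪ {1} : Set A).Countable :=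
    ((hsc.mono hbss).image _).union (Set.countable_singleton _)
  obtain ⟨f, hf⟩ := Set.Countable.exists_eq_range hcnt ⟨1, Or.inr rfl⟩
  refine ⟨f, ?_, ?_⟩
  · intro j
    have hm : f j ∈ den '' bs ∪ {1} := hf ▸ Set.mem_range_self j
    rcases hm with ⟨v, _, hv⟩ | h
    · exact hv ▸ hnd0 v
    · simp only [Set.mem_singleton_iff] at h; rw [h]; exact one_ne_zero
  intro φ hφ
  have hφden : ∀ v ∈ bs, φ (den v) ≠ 0 := by
    intro v hv
    have : den v ∈ Set.range f := hf ▸ Set.mem_union_left _ ⟨v, hv, rfl⟩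
    obtain ⟨j, hj⟩ := this
    rw [← hj]; exact hφ j
  have hφne : ∀ b : A, φ b ≠ 0 → (algebraMap A M) b ≠ 0 := by
    intro b hb
    have hbA : b ≠ 0 := fun h => hb (by rw [h, map_zero])
    exact (map_ne_zero_iff _ hinj).mpr hbA
  constructor
  · -- existence of lam
    refine ⟨B.constr ℂ (fun i => φ (num i) / φ (den i)), fun v => ?_⟩
    have hv : v ∈ Submodule.span ℂ bs := hbtop ▸ Submodule.mem_top
    induction hv using Submodule.span_induction with
    | mem w hw =>
        refine ⟨num w, den w, hφden w hw, hndΛ w, ?_⟩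
        have hB : B ⟨w, hw⟩ = w := Module.Basis.mk_apply _ _ _
        have hc := Module.Basis.constr_basis B ℂ (fun i : bs => φ (num ↑i) / φ (den ↑i)) ⟨w, hw⟩
        rw [hB] at hc
        exact hc
    | zero => exact ⟨0, 1, by simp, by simp, by simp⟩
    | add v w _ _ ihv ihw =>
        obtain ⟨a, b, hb, hΛv, hlv⟩ := ihv
        obtain ⟨a', b', hb', hΛw, hlw⟩ := ihw
        refine ⟨a * b' + a' * b, b * b', by simp [hb, hb'], ?_, ?_⟩
        · rw [TensorProduct.tmul_add, map_add, hΛv, hΛw]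
          have h1 := hφne b hb
          have h2 := hφne b' hb'
          field_simp
          simp only [map_mul, map_add]
          ring
        · rw [map_add, hlv, hlw]
          simp only [map_add, map_mul]
          field_simp
    | smul r v _ ih =>
        obtain ⟨a, b, hb, hΛv, hlv⟩ := ih
        refine ⟨algebraMap ℂ A r * a, b, hb, ?_, ?_⟩
        · rw [TensorProduct.tmul_smul, LinearMap.map_smul_of_tower, hΛv, Algebra.smul_def,
            IsScalarTower.algebraMap_apply ℂ A M, map_mul, mul_div_assoc]
        · rw [map_smul, hlv, map_mul, AlgHom.commutes, smul_eq_mul, mul_div_assoc]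
          norm_num
  · -- any such lam solves the system
    intro lam hlam r
    have key2 : ∀ y : A ⊗[ℂ] V, ∃ a b : A, φ b ≠ 0 ∧
        Λ (TensorProduct.map (IsScalarTower.toAlgHom ℂ A M).toLinearMap LinearMap.id y)
          = algebraMap A M a / algebraMap A M b ∧
        lam (TensorProduct.lift ((LinearMap.lsmul ℂ V).comp φ.toLinearMap) y) = φ a / φ b := by
      intro y
      induction y using TensorProduct.induction_on with
      | zero => exact ⟨0, 1, by simp, by simp, by simp⟩
      | tmul a₀ v =>
          obtain ⟨a, b, hb, hΛv, hlv⟩ := hlam v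
          refine ⟨a₀ * a, b, hb, ?_, ?_⟩
          · rw [TensorProduct.map_tmul]
            have ht : (IsScalarTower.toAlgHom ℂ A M).toLinearMap a₀ ⊗ₜ[ℂ] ((LinearMap.id : V →ₗ[ℂ] V) v)
                = (algebraMap A M a₀) • ((1:M) ⊗ₜ[ℂ] v) := by
              rw [TensorProduct.smul_tmul']
              simp [Algebra.smul_def]
            rw [ht, map_smul, hΛv, smul_eq_mul, map_mul, mul_div_assoc]
          · rw [TensorProduct.lift.tmul]
            simp only [LinearMap.coe_comp, Function.comp_apply, AlgHom.toLinearMap_apply,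
              LinearMap.lsmul_apply]
            rw [map_smul, hlv, smul_eq_mul, map_mul, mul_div_assoc]
      | add y z ihy ihz =>
          obtain ⟨a, b, hb, hΛy, hly⟩ := ihy
          obtain ⟨a', b', hb', hΛz, hlz⟩ := ihz
          refine ⟨a * b' + a' * b, b * b', by simp [hb, hb'], ?_, ?_⟩
          · rw [map_add, map_add, hΛy, hΛz]
            have h1 := hφne b hb
            have h2 := hφne b' hb'
            field_simp
            simp only [map_mul, map_add]
            ring
          · rw [map_add, map_add, hly, hlz]
            simp only [map_add, map_mul]
            field_simp
    obtain ⟨a, b, hb, h1, h2⟩ := key2 (x r)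
    rw [hΛ r] at h1
    have hbM := hφne b hb
    have hA : c r * b = a := by
      apply hinj
      rw [map_mul, h1, div_mul_cancel₀ _ hbM]
    have hφA : φ (c r) * φ b = φ a := by rw [← map_mul, hA]
    rw [h2, div_eq_iff hb]
    exact hφA.symm
end
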